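/- arXiv:2109.03860 — 6 statements merged into one kernel-verified Lean document; each statement's English description precedes it below -/
import Mathlib

section
/- Let X = !![0,1;1,0], Y = !![0,-I;I,0], Z = !![1,0;0,-1] be the Pauli matrices in M_2(ℂ). For any two unit vectors u, v ∈ ℂ², the sum (u†Xu)(v†Xv) + (u†Yu)(v†Yv) + (u†Zu)(v†Zv) is a real number that is greater than or equal to −1. Equivalently, for every pure product two-qubit state |u⟩⊗|v⟩, the expectation value ⟨X⊗X⟩ + ⟨Y⊗Y⟩ + ⟨Z⊗Z⟩ ≥ −1. -/
open Matrix Complex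

/-- The Pauli matrix X. -/
noncomputable def pauliX : Matrix (Fin 2) (Fin 2) ℂ := !![0, 1; 1, 0]

/-- The Pauli matrix Y. -/
noncomputable def pauliY : Matrix (Fin 2) (Fin 2) ℂ := !![0, -I; I, 0]

/-- The Pauli matrix Z. -/
noncomputable def pauliZ : Matrix (Fin 2) (Fin 2) ℂ := !![1, 0; 0, -1]

/-- The expectation value u† P u of a 2×2 matrix P in the vector u. -/
noncomputable def expVal (P : Matrix (Fin 2) (Fin 2) ℂ) (u : Fin 2 → ℂ) : ℂ :=
  star u ⬝ᵥ P.mulVec u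

/-- For any two unit vectors u, v ∈ ℂ², the quantity
⟨X⟩_u⟨X⟩_v + ⟨Y⟩_u⟨Y⟩_v + ⟨Z⟩_u⟨Z⟩_v is real and at least −1. -/
theorem pauli_product_expectation_ge_neg_one
    (u v : Fin 2 → ℂ)
    (hu : ∑ i, ‖u i‖ ^ 2 = 1)
    (hv : ∑ i, ‖v i‖ ^ 2 = 1) :
    ∃ r : ℝ,
      expVal pauliX u * expVal pauliX v + expVal pauliY u * expVal pauliY v
        + expVal pauliZ u * expVal pauliZ v = (r : ℂ) ∧ -1 ≤ r := by
  set p := (u 0).re; set q := (u 0).im; set r := (u 1).re; set s := (u 1).im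
  set p' := (v 0).re; set q' := (v 0).im; set r' := (v 1).re; set s' := (v 1).im
  have hu' : p^2 + q^2 + (r^2 + s^2) = 1 := by
    have h := hu
    simp only [Fin.sum_univ_two, Complex.sq_norm, Complex.normSq_apply] at h
    linear_combination h
  have hv' : p'^2 + q'^2 + (r'^2 + s'^2) = 1 := by
    have h := hv
    simp only [Fin.sum_univ_two, Complex.sq_norm, Complex.normSq_apply] at h
    linear_combination h
  set A1 := 2*(p*r + q*s); set A2 := 2*(p*s - q*r); set A3 := p^2+q^2-(r^2+s^2)
  set B1 := 2*(p'*r' + q'*s'); set B2 := 2*(p'*s' - q'*r'); set B3 := p'^2+q'^2-(r'^2+s'^2)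
  refine ⟨A1*B1 + A2*B2 + A3*B3, ?_, ?_⟩
  · simp only [expVal, pauliX, pauliY, pauliZ, dotProduct, mulVec, Fin.sum_univ_two,
      Matrix.cons_val', Matrix.cons_val_zero, Matrix.cons_val_one, Matrix.head_cons,
      Matrix.empty_val', Matrix.cons_val_fin_one, Matrix.head_fin_const, Pi.star_apply,
      RCLike.star_def]
    apply Complex.ext <;>
      simp [A1, A2, A3, B1, B2, B3, Complex.add_re, Complex.add_im, Complex.mul_re,
        Complex.mul_im, Complex.I_re, Complex.I_im, Complex.conj_re, Complex.conj_im,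
        ← Complex.ofReal_pow, Complex.ofReal_re, Complex.ofReal_im] <;>
      ring
  · have hA : A1^2 + A2^2 + A3^2 = 1 := by
      have : A1^2 + A2^2 + A3^2 = (p^2 + q^2 + (r^2 + s^2))^2 := by
        simp only [A1, A2, A3]; ring
      rw [this, hu']; norm_num
    have hB : B1^2 + B2^2 + B3^2 = 1 := by
      have : B1^2 + B2^2 + B3^2 = (p'^2 + q'^2 + (r'^2 + s'^2))^2 := by
        simp only [B1, B2, B3]; ring
      rw [this, hv']; norm_num
    nlinarith [sq_nonneg (A1+B1), sq_nonneg (A2+B2), sq_nonneg (A3+B3)]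
end

section
/- Let X, Y, Z be the Pauli matrices and let |ψ⁻⟩ = (|01⟩ − |10⟩)/√2 ∈ ℂ²⊗ℂ² be the singlet state. The singlet is the unique state with perfect anti-correlations in all three Pauli bases: if ρ is a 4×4 density matrix (positive semidefinite, trace 1) satisfying Tr[ρ(X⊗X)] = Tr[ρ(Y⊗Y)] = Tr[ρ(Z⊗Z)] = −1, then ρ = |ψ⁻⟩⟨ψ⁻|. -/
open Matrix Complex Kronecker
open scoped ComplexOrder

/-- The singlet state |ψ⁻⟩ = (|01⟩ − |10⟩)/√2 as a vector in ℂ²⊗ℂ². -/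
noncomputable def singlet : Fin 2 × Fin 2 → ℂ := fun p =>
  (!![0, 1; -1, 0] p.1 p.2) / (Real.sqrt 2 : ℂ)

lemma quad_aux {n : Type*} [Fintype n] [DecidableEq n] {ρ : Matrix n n ℂ}
    (h : ρ.PosSemidef) (i j : n) (z : ℂ) :
    0 ≤ (starRingEnd ℂ) z * ρ i i * z + (starRingEnd ℂ) z * ρ i j + ρ j i * z + ρ j j := by
  have h2 := h.dotProduct_mulVec_nonneg (Pi.single i z + Pi.single j 1 : n → ℂ)
  have hs : star ((Pi.single i z + Pi.single j 1 : n → ℂ))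
      = (Pi.single i ((starRingEnd ℂ) z) + Pi.single j 1 : n → ℂ) := by
    funext k
    by_cases hk : k = i <;> by_cases hk' : k = j <;>
      simp [Pi.single_apply, hk, hk', eq_comm, apply_ite (starRingEnd ℂ)]
  rw [hs] at h2
  simp [Matrix.mulVec_add, Matrix.mulVec_single, dotProduct_add,
    add_dotProduct, single_dotProduct, mul_comm, mul_assoc,
    mul_left_comm, add_assoc, add_comm, add_left_comm] at h2
  convert h2 using 1; ring

lemma diag_re_nonneg {n : Type*} [Fintype n] [DecidableEq n] {ρ : Matrix n n ℂ}
    (h : ρ.PosSemidef) (j : n) : 0 ≤ (ρ j j).re ∧ (ρ j j).im = 0 := by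
  have := quad_aux h j j 0
  simp only [map_zero, zero_mul, mul_zero, add_zero, zero_add] at this
  rw [Complex.le_def] at this
  exact ⟨by simpa using this.1, by simpa using this.2.symm⟩

lemma offdiag_bound {n : Type*} [Fintype n] [DecidableEq n] {ρ : Matrix n n ℂ}
    (h : ρ.PosSemidef) (i j : n) :
    (ρ i j).re ^ 2 + (ρ i j).im ^ 2 ≤ (ρ i i).re * (ρ j j).re := by
  have hji : ρ j i = (starRingEnd ℂ) (ρ i j) := (h.1.apply j i).symm
  have hii := diag_re_nonneg h i
  have hjj := diag_re_nonneg h j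
  set c := ρ i j with hc
  set a := (ρ i i).re with ha
  set d := (ρ j j).re with hd
  have hmnn : (0:ℝ) ≤ c.re ^ 2 + c.im ^ 2 := by positivity
  have key : ∀ t : ℝ, 0 ≤ t ^ 2 * (c.re ^ 2 + c.im ^ 2) * a + 2 * t * (c.re ^ 2 + c.im ^ 2) + d := by
    intro t
    have h0 := quad_aux h i j ((t : ℂ) * c)
    rw [hji, Complex.le_def] at h0
    have h1 := h0.1
    simp only [Complex.add_re, Complex.mul_re, Complex.mul_im, Complex.add_im,
      _root_.map_mul, Complex.conj_re, Complex.conj_im, Complex.ofReal_re, Complex.ofReal_im,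
      Complex.zero_re, hii.2, hjj.2, ← ha, ← hd] at h1
    nlinarith [h1]
  rcases eq_or_lt_of_le hmnn with hm0 | hmpos
  · nlinarith [mul_nonneg hii.1 hjj.1]
  rcases eq_or_lt_of_le hii.1 with ha0 | hapos
  · exfalso
    set m : ℝ := c.re ^ 2 + c.im ^ 2 with hm
    have hmne : (2 * m) ≠ 0 := by positivity
    have h3 : 2 * (-((d + 1) / (2 * m))) * m = -(d + 1) := by field_simp
    have h4 := key (-((d + 1) / (2 * m)))
    rw [← ha0] at h4
    rw [mul_zero, zero_add] at h4
    rw [h3] at h4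
    nlinarith [hjj.1]
  · set m : ℝ := c.re ^ 2 + c.im ^ 2 with hm
    have hane : a ≠ 0 := ne_of_gt hapos
    have h4 := key (-(1 / a))
    have e1 : (-(1 / a)) ^ 2 * m * a = m / a := by field_simp
    have e2 : 2 * (-(1 / a)) * m = -(2 * (m / a)) := by field_simp
    rw [e1, e2] at h4
    have h5 : m / a ≤ d := by linarith
    rw [div_le_iff₀ hapos] at h5
    nlinarith [h5]

/-- Uniqueness of the singlet: any two-qubit density matrix with perfect
anti-correlations in the X, Y and Z bases is the singlet state. -/
theorem singlet_unique_anticorrelations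
    (ρ : Matrix (Fin 2 × Fin 2) (Fin 2 × Fin 2) ℂ)
    (hpsd : ρ.PosSemidef) (htr : ρ.trace = 1)
    (hX : (ρ * (pauliX ⊗ₖ pauliX)).trace = -1)
    (hY : (ρ * (pauliY ⊗ₖ pauliY)).trace = -1)
    (hZ : (ρ * (pauliZ ⊗ₖ pauliZ)).trace = -1) :
    ρ = vecMulVec singlet (star singlet) := by
  have hherm := hpsd.1
  simp [Matrix.trace, Matrix.diag, Matrix.mul_apply, Fintype.sum_prod_type,
    Fin.sum_univ_two, pauliX, pauliY, pauliZ, Matrix.kroneckerMap_apply] at hX hY hZ htr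
  -- diagonal facts
  have d0 := diag_re_nonneg hpsd (0 : Fin 2 × Fin 2)
  have d3 := diag_re_nonneg hpsd (1 : Fin 2 × Fin 2)
  -- corner diagonals vanish
  have hsum : ρ 0 0 + ρ 1 1 = 0 := by linear_combination (hZ + htr) / 2
  have hre : (ρ 0 0).re + (ρ 1 1).re = 0 := by
    have := congrArg Complex.re hsum; simpa using this
  have h00re : (ρ 0 0).re = 0 := by linarith [d0.1, d3.1]
  have h33re : (ρ 1 1).re = 0 := by linarith [d0.1, d3.1]
  have h00 : ρ 0 0 = 0 := Complex.ext h00re d0.2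
  have h33 : ρ 1 1 = 0 := Complex.ext h33re d3.2
  -- whole rows/columns vanish
  have row0 : ∀ j, ρ 0 j = 0 := by
    intro j
    have hb := offdiag_bound hpsd 0 j
    rw [h00] at hb
    simp only [Complex.zero_re, zero_mul] at hb
    exact Complex.ext
      (by simp only [Complex.zero_re]; nlinarith [sq_nonneg (ρ 0 j).re, sq_nonneg (ρ 0 j).im])
      (by simp only [Complex.zero_im]; nlinarith [sq_nonneg (ρ 0 j).re, sq_nonneg (ρ 0 j).im])
  have row3 : ∀ j, ρ 1 j = 0 := by
    intro j
    have hb := offdiag_bound hpsd 1 j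
    rw [h33] at hb
    simp only [Complex.zero_re, zero_mul] at hb
    exact Complex.ext
      (by simp only [Complex.zero_re]; nlinarith [sq_nonneg (ρ 1 j).re, sq_nonneg (ρ 1 j).im])
      (by simp only [Complex.zero_im]; nlinarith [sq_nonneg (ρ 1 j).re, sq_nonneg (ρ 1 j).im])
  have col0 : ∀ j, ρ j 0 = 0 := fun j => by
    rw [← hherm.apply j 0, row0 j, star_zero]
  have col3 : ∀ j, ρ j 1 = 0 := fun j => by
    rw [← hherm.apply j 1, row3 j, star_zero]
  -- the middle block
  have hconj : ρ (1,0) (0,1) = (starRingEnd ℂ) (ρ (0,1) (1,0)) :=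
    (hherm.apply (1,0) (0,1)).symm
  have hc : ρ (0,1) (1,0) + ρ (1,0) (0,1) = -1 := by
    rw [show ρ (0,0) (1,1) = 0 from row0 _, show ρ (1,1) (0,0) = 0 from row3 _] at hX
    linear_combination hX
  have hcre : (ρ (0,1) (1,0)).re = -(1/2) := by
    rw [hconj] at hc
    have := congrArg Complex.re hc
    simp only [Complex.add_re, Complex.conj_re, Complex.neg_re, Complex.one_re] at this
    linarith
  have had : ρ (0,1) (0,1) + ρ (1,0) (1,0) = 1 := by
    rw [show ρ (0,0) (0,0) = 0 from h00, show ρ (1,1) (1,1) = 0 from h33] at htr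
    linear_combination htr
  have hadre : (ρ (0,1) (0,1)).re + (ρ (1,0) (1,0)).re = 1 := by
    have := congrArg Complex.re had; simpa using this
  have d1 := diag_re_nonneg hpsd ((0,1) : Fin 2 × Fin 2)
  have d2 := diag_re_nonneg hpsd ((1,0) : Fin 2 × Fin 2)
  have hb := offdiag_bound hpsd ((0,1) : Fin 2 × Fin 2) ((1,0) : Fin 2 × Fin 2)
  have key2 : ((ρ (0,1) (0,1)).re - (ρ (1,0) (1,0)).re) ^ 2
      + 4 * (ρ (0,1) (1,0)).im ^ 2 ≤ 0 := by nlinarith [hb, hadre, hcre]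
  have him : (ρ (0,1) (1,0)).im = 0 := by
    have h2 : (ρ (0,1) (1,0)).im ^ 2 = 0 :=
      le_antisymm (by nlinarith [sq_nonneg ((ρ (0,1) (0,1)).re - (ρ (1,0) (1,0)).re)]) (sq_nonneg _)
    exact pow_eq_zero_iff two_ne_zero |>.mp h2
  have haeq : (ρ (0,1) (0,1)).re = (ρ (1,0) (1,0)).re := by
    have h2 : ((ρ (0,1) (0,1)).re - (ρ (1,0) (1,0)).re) ^ 2 = 0 :=
      le_antisymm (by nlinarith [sq_nonneg (ρ (0,1) (1,0)).im]) (sq_nonneg _)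
    have := pow_eq_zero_iff two_ne_zero |>.mp h2
    linarith [sub_eq_zero.mp this]
  have ha' : ρ (0,1) (0,1) = (1/2 : ℂ) := by
    apply Complex.ext
    · simp only [← Complex.ofReal_one]
      norm_num
      linarith
    · simp [d1.2]
  have hd' : ρ (1,0) (1,0) = (1/2 : ℂ) := by
    apply Complex.ext
    · norm_num
      linarith
    · simp [d2.2]
  have hc' : ρ (0,1) (1,0) = -(1/2 : ℂ) := by
    apply Complex.ext
    · simpa using hcre
    · simpa using him
  have hc'' : ρ (1,0) (0,1) = -(1/2 : ℂ) := by
    rw [hconj, hc']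
    simp [Complex.ext_iff]
  -- singlet values
  have hs2 : ((Real.sqrt 2 : ℝ) : ℂ) * ((Real.sqrt 2 : ℝ) : ℂ) = 2 := by
    norm_cast
    rw [Real.mul_self_sqrt (by norm_num)]
  have hs2ne : ((Real.sqrt 2 : ℝ) : ℂ) ≠ 0 := by
    simpa using (Real.sqrt_ne_zero' (x := 2)).mpr (by norm_num)
  have row0' : ∀ j, ρ (0,0) j = 0 := row0
  have row3' : ∀ j, ρ (1,1) j = 0 := row3
  have col0' : ∀ j, ρ j (0,0) = 0 := col0
  have col3' : ∀ j, ρ j (1,1) = 0 := col3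
  ext ⟨i1, i2⟩ ⟨j1, j2⟩
  fin_cases i1 <;> fin_cases i2 <;> fin_cases j1 <;> fin_cases j2 <;>
    simp only [Prod.mk_zero_zero, Prod.mk_one_one] <;>
    simp [Matrix.vecMulVec_apply, singlet, row0', row3', col0', col3', ha', hd', hc', hc'',
      Pi.star_apply, Complex.ext_iff, div_mul_div_comm] <;>
      field_simp
end

section
/- Let X, Y, Z, 1 denote the 2×2 Pauli matrices and identity, and on (ℂ²)^{⊗4} define the stabilizers G₂ = Z⊗X⊗Z⊗1, G₃ = 1⊗Z⊗X⊗Z, and their product G₂G₃ = Z⊗Y⊗Y⊗Z (as 16×16 matrices via the Kronecker product). For every fully separable four-qubit state ρ — i.e., every finite convex combination ρ = Σ_k p_k (A_k ⊗ B_k ⊗ C_k ⊗ D_k) with p_k ≥ 0 summing to 1 and A_k, B_k, C_k, D_k single-qubit density matrices — one has (1/3)·[Tr(ρ(1+G₂)/2) + Tr(ρ(1+G₃)/2) + Tr(ρ(1+G₂G₃)/2)] ≤ 2/3. In particular, no separable state satisfies G₂ = G₃ = G₂G₃ = +1 simultaneously. -/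
open Matrix Complex Kronecker
open scoped ComplexOrder

variable (M : Matrix (Fin 2) (Fin 2) ℂ)

lemma traceX : (M * pauliX).trace = M 0 1 + M 1 0 := by
  simp [pauliX, Matrix.trace, Matrix.mul_apply, Fin.sum_univ_two, Matrix.diag]

lemma traceY : (M * pauliY).trace = I * M 0 1 - I * M 1 0 := by
  simp [pauliY, Matrix.trace, Matrix.mul_apply, Fin.sum_univ_two, Matrix.diag]
  ring

lemma traceZ : (M * pauliZ).trace = M 0 0 - M 1 1 := by
  simp [pauliZ, Matrix.trace, Matrix.mul_apply, Fin.sum_univ_two, Matrix.diag]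
  ring

lemma psd_ineq (h : M.PosSemidef) (htr : M.trace = 1) :
    (M 0 0).re * ((M 0 0).re * (M 1 1).re - (M 0 1).re^2 - (M 0 1).im^2) ≥ 0 ∧
    (M 1 1).re * ((M 0 0).re * (M 1 1).re - (M 0 1).re^2 - (M 0 1).im^2) ≥ 0 := by
  have h10 : M 1 0 = star (M 0 1) := (h.1.apply 1 0).symm ▸ rfl
  have h00 : (((M 0 0).re : ℝ) : ℂ) = M 0 0 := h.1.coe_re_apply_self 0
  have h11 : (((M 1 1).re : ℝ) : ℂ) = M 1 1 := h.1.coe_re_apply_self 1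
  have e1 := h.dotProduct_mulVec_nonneg ![M 0 1, -(M 0 0)]
  have e2 := h.dotProduct_mulVec_nonneg ![-(M 1 1), star (M 0 1)]
  rw [Complex.le_def] at e1 e2
  have him00 : (M 0 0).im = 0 := by
    have := congrArg Complex.im h00; simpa using this.symm
  have him11 : (M 1 1).im = 0 := by
    have := congrArg Complex.im h11; simpa using this.symm
  constructor
  · have := e1.1
    simp [dotProduct, Matrix.mulVec, Fin.sum_univ_two, h10, him00, him11] at this
    nlinarith [this]
  · have := e2.1
    simp [dotProduct, Matrix.mulVec, Fin.sum_univ_two, h10, him00, him11] at this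
    nlinarith [this]

lemma bloch (h : M.PosSemidef) (htr : M.trace = 1) :
    (2 * (M 0 1).re)^2 + (2 * (M 0 1).im)^2 + ((M 0 0).re - (M 1 1).re)^2 ≤ 1 := by
  obtain ⟨e1, e2⟩ := psd_ineq M h htr
  have hsum : (M 0 0).re + (M 1 1).re = 1 := by
    have : (M.trace).re = 1 := by rw [htr]; simp
    simpa [Matrix.trace, Fin.sum_univ_two, Matrix.diag] using this
  have hD : 0 ≤ (M 0 0).re * (M 1 1).re - (M 0 1).re ^ 2 - (M 0 1).im ^ 2 := by
    have h' : ((M 0 0).re + (M 1 1).re) * ((M 0 0).re * (M 1 1).re - (M 0 1).re ^ 2 - (M 0 1).im ^ 2)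
        = (M 0 0).re * (M 1 1).re - (M 0 1).re ^ 2 - (M 0 1).im ^ 2 := by rw [hsum]; ring
    nlinarith [e1, e2, h']
  have hsq : ((M 0 0).re + (M 1 1).re)^2 = 1 := by rw [hsum]; norm_num
  nlinarith [hD, hsq]

lemma traceX_real (h : M.IsHermitian) :
    (M * pauliX).trace = ((2 * (M 0 1).re : ℝ) : ℂ) := by
  rw [traceX]
  have h10 : M 1 0 = star (M 0 1) := (h.apply 1 0).symm
  rw [h10]
  apply Complex.ext <;> simp <;> ring

lemma traceY_real (h : M.IsHermitian) :
    (M * pauliY).trace = ((-2 * (M 0 1).im : ℝ) : ℂ) := by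
  rw [traceY]
  have h10 : M 1 0 = star (M 0 1) := (h.apply 1 0).symm
  rw [h10]
  apply Complex.ext <;> simp [Complex.mul_re, Complex.mul_im] <;> ring

lemma traceZ_real (h : M.IsHermitian) :
    (M * pauliZ).trace = (((M 0 0).re - (M 1 1).re : ℝ) : ℂ) := by
  rw [traceZ]
  have him00 : (M 0 0).im = 0 := by
    have := congrArg Complex.im (h.coe_re_apply_self 0); simpa using this.symm
  have him11 : (M 1 1).im = 0 := by
    have := congrArg Complex.im (h.coe_re_apply_self 1); simpa using this.symm
  apply Complex.ext <;> simp [him00, him11]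

lemma key_ineq (a b1 b2 b3 c1 c2 c3 d : ℝ)
    (ha : a^2 ≤ 1) (hd : d^2 ≤ 1) (hb : b1^2 + b2^2 + b3^2 ≤ 1)
    (hc : c1^2 + c2^2 + c3^2 ≤ 1) :
    a * b1 * c3 + b3 * c1 * d + a * b2 * c2 * d ≤ 1 := by
  nlinarith [sq_nonneg (b1 - a*c3), sq_nonneg (b3 - c1*d), sq_nonneg (b2 - a*c2*d),
    mul_nonneg (sub_nonneg.2 ha) (sq_nonneg c3),
    mul_nonneg (sub_nonneg.2 hd) (sq_nonneg c1),
    mul_nonneg (sub_nonneg.2 ha) (sq_nonneg c2),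
    mul_nonneg (mul_nonneg (sub_nonneg.2 hd) (sq_nonneg a)) (sq_nonneg c2)]

lemma kron4_trace (A B C D P Q R S : Matrix (Fin 2) (Fin 2) ℂ) :
    ((A ⊗ₖ (B ⊗ₖ (C ⊗ₖ D))) * (P ⊗ₖ (Q ⊗ₖ (R ⊗ₖ S)))).trace
      = (A * P).trace * ((B * Q).trace * ((C * R).trace * (D * S).trace)) := by
  rw [← mul_kronecker_mul, ← mul_kronecker_mul, ← mul_kronecker_mul,
    trace_kronecker, trace_kronecker, trace_kronecker]

/-- The stabilizer G₂ = Z⊗X⊗Z⊗1 on four qubits. -/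
noncomputable def G2 : Matrix (Fin 2 × (Fin 2 × (Fin 2 × Fin 2)))
    (Fin 2 × (Fin 2 × (Fin 2 × Fin 2))) ℂ :=
  pauliZ ⊗ₖ (pauliX ⊗ₖ (pauliZ ⊗ₖ (1 : Matrix (Fin 2) (Fin 2) ℂ)))

/-- The stabilizer G₃ = 1⊗Z⊗X⊗Z on four qubits. -/
noncomputable def G3 : Matrix (Fin 2 × (Fin 2 × (Fin 2 × Fin 2)))
    (Fin 2 × (Fin 2 × (Fin 2 × Fin 2))) ℂ :=
  (1 : Matrix (Fin 2) (Fin 2) ℂ) ⊗ₖ (pauliZ ⊗ₖ (pauliX ⊗ₖ pauliZ))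

/-- The product G₂G₃ = Z⊗Y⊗Y⊗Z on four qubits. -/
noncomputable def G23 : Matrix (Fin 2 × (Fin 2 × (Fin 2 × Fin 2)))
    (Fin 2 × (Fin 2 × (Fin 2 × Fin 2))) ℂ :=
  pauliZ ⊗ₖ (pauliY ⊗ₖ (pauliY ⊗ₖ pauliZ))

set_option maxHeartbeats 1000000 in
/-- For every fully separable four-qubit state ρ one has
(1/3)·[Tr(ρ(1+G₂)/2) + Tr(ρ(1+G₃)/2) + Tr(ρ(1+G₂G₃)/2)] ≤ 2/3. -/
theorem separable_bound_cluster_stabilizers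
    {K : ℕ} (p : Fin K → ℝ)
    (A B C D : Fin K → Matrix (Fin 2) (Fin 2) ℂ)
    (hp : ∀ k, 0 ≤ p k) (hpsum : ∑ k, p k = 1)
    (hA : ∀ k, (A k).PosSemidef) (hAtr : ∀ k, (A k).trace = 1)
    (hB : ∀ k, (B k).PosSemidef) (hBtr : ∀ k, (B k).trace = 1)
    (hC : ∀ k, (C k).PosSemidef) (hCtr : ∀ k, (C k).trace = 1)
    (hD : ∀ k, (D k).PosSemidef) (hDtr : ∀ k, (D k).trace = 1)
    (ρ : Matrix (Fin 2 × (Fin 2 × (Fin 2 × Fin 2)))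
      (Fin 2 × (Fin 2 × (Fin 2 × Fin 2))) ℂ)
    (hρ : ρ = ∑ k, (p k : ℂ) • (A k ⊗ₖ (B k ⊗ₖ (C k ⊗ₖ D k)))) :
    (1 / 3 : ℂ) *
      ((ρ * ((1 / 2 : ℂ) • (1 + G2))).trace
        + (ρ * ((1 / 2 : ℂ) • (1 + G3))).trace
        + (ρ * ((1 / 2 : ℂ) • (1 + G23))).trace)
      ≤ (2 / 3 : ℂ) := by
  -- real Bloch components
  set az : Fin K → ℝ := fun k => (A k 0 0).re - (A k 1 1).re with haz
  set bx : Fin K → ℝ := fun k => 2 * (B k 0 1).re with hbx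
  set by' : Fin K → ℝ := fun k => -2 * (B k 0 1).im with hby
  set bz : Fin K → ℝ := fun k => (B k 0 0).re - (B k 1 1).re with hbz
  set cx : Fin K → ℝ := fun k => 2 * (C k 0 1).re with hcx
  set cy : Fin K → ℝ := fun k => -2 * (C k 0 1).im with hcy
  set cz : Fin K → ℝ := fun k => (C k 0 0).re - (C k 1 1).re with hcz
  set dz : Fin K → ℝ := fun k => (D k 0 0).re - (D k 1 1).re with hdz
  have hTr : ρ.trace = 1 := by
    rw [hρ, Matrix.trace_sum]
    simp only [Matrix.trace_smul, trace_kronecker, hAtr, hBtr, hCtr, hDtr,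
      mul_one, smul_eq_mul]
    rw [← Complex.ofReal_sum, hpsum, Complex.ofReal_one]
  have expand : ∀ Gm, (ρ * Gm).trace
      = ∑ k, (p k : ℂ) * ((A k ⊗ₖ (B k ⊗ₖ (C k ⊗ₖ D k))) * Gm).trace := by
    intro Gm
    rw [hρ, Finset.sum_mul, Matrix.trace_sum]
    simp [Matrix.smul_mul, Matrix.trace_smul, smul_eq_mul]
  have h2 : (ρ * G2).trace = ((∑ k, p k * (az k * bx k * cz k) : ℝ) : ℂ) := by
    rw [expand G2, Complex.ofReal_sum]
    refine Finset.sum_congr rfl fun k _ => ?_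
    rw [show G2 = pauliZ ⊗ₖ (pauliX ⊗ₖ (pauliZ ⊗ₖ (1 : Matrix (Fin 2) (Fin 2) ℂ))) from rfl,
      kron4_trace, traceZ_real _ (hA k).1, traceX_real _ (hB k).1,
      traceZ_real _ (hC k).1, mul_one (D k), hDtr k]
    simp only [haz, hbx, hby, hbz, hcx, hcy, hcz, hdz]
    push_cast
    ring
  have h3 : (ρ * G3).trace = ((∑ k, p k * (bz k * cx k * dz k) : ℝ) : ℂ) := by
    rw [expand G3, Complex.ofReal_sum]
    refine Finset.sum_congr rfl fun k _ => ?_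
    rw [show G3 = (1 : Matrix (Fin 2) (Fin 2) ℂ) ⊗ₖ (pauliZ ⊗ₖ (pauliX ⊗ₖ pauliZ)) from rfl,
      kron4_trace, traceZ_real _ (hB k).1, traceX_real _ (hC k).1,
      traceZ_real _ (hD k).1, mul_one (A k), hAtr k]
    simp only [haz, hbx, hby, hbz, hcx, hcy, hcz, hdz]
    push_cast
    ring
  have h23 : (ρ * G23).trace = ((∑ k, p k * (az k * by' k * cy k * dz k) : ℝ) : ℂ) := by
    rw [expand G23, Complex.ofReal_sum]
    refine Finset.sum_congr rfl fun k _ => ?_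
    rw [show G23 = pauliZ ⊗ₖ (pauliY ⊗ₖ (pauliY ⊗ₖ pauliZ)) from rfl,
      kron4_trace, traceZ_real _ (hA k).1, traceY_real _ (hB k).1,
      traceY_real _ (hC k).1, traceZ_real _ (hD k).1]
    simp only [haz, hbx, hby, hbz, hcx, hcy, hcz, hdz]
    push_cast
    ring
  have hgoal : (1 / 3 : ℂ) *
      ((ρ * ((1 / 2 : ℂ) • (1 + G2))).trace
        + (ρ * ((1 / 2 : ℂ) • (1 + G3))).trace
        + (ρ * ((1 / 2 : ℂ) • (1 + G23))).trace)
      = (((1/6) * (3 + ((∑ k, p k * (az k * bx k * cz k))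
          + (∑ k, p k * (bz k * cx k * dz k))
          + (∑ k, p k * (az k * by' k * cy k * dz k)))) : ℝ) : ℂ) := by
    rw [Matrix.mul_smul, Matrix.mul_smul, Matrix.mul_smul,
      Matrix.trace_smul, Matrix.trace_smul, Matrix.trace_smul,
      Matrix.mul_add, Matrix.mul_add, Matrix.mul_add, Matrix.mul_one,
      Matrix.trace_add, Matrix.trace_add, Matrix.trace_add,
      hTr, h2, h3, h23, smul_eq_mul, smul_eq_mul, smul_eq_mul]
    simp only [haz, hbx, hby, hbz, hcx, hcy, hcz, hdz]
    push_cast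
    ring
  rw [hgoal, show (2/3 : ℂ) = ((2/3 : ℝ) : ℂ) by norm_num]
  rw [Complex.real_le_real]
  have hterm : ∀ k, az k * bx k * cz k + bz k * cx k * dz k
      + az k * by' k * cy k * dz k ≤ 1 := by
    intro k
    have bA := bloch (A k) (hA k) (hAtr k)
    have bB := bloch (B k) (hB k) (hBtr k)
    have bC := bloch (C k) (hC k) (hCtr k)
    have bD := bloch (D k) (hD k) (hDtr k)
    have ha : az k ^ 2 ≤ 1 := by
      simp only [haz]; nlinarith [sq_nonneg (2 * (A k 0 1).re), sq_nonneg (2 * (A k 0 1).im)]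
    have hd : dz k ^ 2 ≤ 1 := by
      simp only [hdz]; nlinarith [sq_nonneg (2 * (D k 0 1).re), sq_nonneg (2 * (D k 0 1).im)]
    have hb : bx k ^ 2 + by' k ^ 2 + bz k ^ 2 ≤ 1 := by
      simp only [hbx, hby, hbz]; nlinarith [bB]
    have hc : cx k ^ 2 + cy k ^ 2 + cz k ^ 2 ≤ 1 := by
      simp only [hcx, hcy, hcz]; nlinarith [bC]
    exact key_ineq (az k) (bx k) (by' k) (bz k) (cx k) (cy k) (cz k) (dz k) ha hd hb hc
  have hsums : (∑ k, p k * (az k * bx k * cz k))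
      + (∑ k, p k * (bz k * cx k * dz k))
      + (∑ k, p k * (az k * by' k * cy k * dz k)) ≤ 1 := by
    rw [← Finset.sum_add_distrib, ← Finset.sum_add_distrib]
    calc ∑ k, (p k * (az k * bx k * cz k) + p k * (bz k * cx k * dz k)
          + p k * (az k * by' k * cy k * dz k))
        ≤ ∑ k, p k := by
          refine Finset.sum_le_sum fun k _ => ?_
          have := hterm k
          nlinarith [hp k, this]
      _ = 1 := hpsum
  linarith [hsums]
end

section
/- (MUB operator decomposition, Eq. (35).) Let d ≥ 1 and suppose v : Fin (d+1) → Fin d → ℂ^d is a family of d+1 orthonormal bases of ℂ^d that are mutually unbiased: for each m the vectors v(m,1),…,v(m,d) are orthonormal, and |⟪v(m,k), v(n,j)⟫|² = 1/d whenever m ≠ n. Define the rank-one projectors Π_k^{(m)} = |v(m,k)⟩⟨v(m,k)|. Then every d×d complex matrix A satisfies A = −Tr(A)·1 + Σ_{m=1}^{d+1} Σ_{k=1}^{d} Tr(A·Π_k^{(m)})·Π_k^{(m)}. -/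
open Matrix

/-- The rank-one projector |w⟩⟨w|, with entries w_i · conj(w_j). -/
noncomputable def projOf {d : ℕ} (w : Fin d → ℂ) : Matrix (Fin d) (Fin d) ℂ :=
  vecMulVec w (star w)

open Finset Complex

namespace MUBaux
variable {d : ℕ}

lemma sum_swap_4 {α β γ δ' : Type*} [Fintype α] [Fintype β] [Fintype γ] [Fintype δ']
    (F : α → β → γ → δ' → ℂ) :
    ∑ a, ∑ b, ∑ c, ∑ e, F a b c e = ∑ c, ∑ e, ∑ a, ∑ b, F a b c e := by
  calc ∑ a, ∑ b, ∑ c, ∑ e, F a b c e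
      = ∑ a, ∑ c, ∑ b, ∑ e, F a b c e :=
        Finset.sum_congr rfl fun _ _ => Finset.sum_comm
    _ = ∑ c, ∑ a, ∑ b, ∑ e, F a b c e := Finset.sum_comm
    _ = ∑ c, ∑ a, ∑ e, ∑ b, F a b c e :=
        Finset.sum_congr rfl fun _ _ => Finset.sum_congr rfl fun _ _ => Finset.sum_comm
    _ = ∑ c, ∑ e, ∑ a, ∑ b, F a b c e :=
        Finset.sum_congr rfl fun _ _ => Finset.sum_comm

lemma design (hd : 1 ≤ d) (v : Fin (d+1) → Fin d → Fin d → ℂ)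
    (horth : ∀ m k j, star (v m k) ⬝ᵥ v m j = if k = j then 1 else 0)
    (hunbiased : ∀ m n, m ≠ n → ∀ k j,
      ‖star (v m k) ⬝ᵥ v n j‖ ^ 2 = 1 / (d : ℝ))
    (i j p q : Fin d) :
    ∑ m, ∑ k, v m k i * (starRingEnd ℂ) (v m k j) * (v m k p * (starRingEnd ℂ) (v m k q))
      = (if i = j then (1:ℂ) else 0) * (if p = q then 1 else 0)
        + (if i = q then 1 else 0) * (if p = j then 1 else 0) := by
  have hd0 : (d : ℂ) ≠ 0 := Nat.cast_ne_zero.mpr (by omega)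
  set a : (Fin (d+1) × Fin d) → ((Fin d × Fin d) × Fin d × Fin d) → ℂ := fun M I =>
    v M.1 M.2 I.1.1 * (starRingEnd ℂ) (v M.1 M.2 I.1.2) *
      (v M.1 M.2 I.2.1 * (starRingEnd ℂ) (v M.1 M.2 I.2.2)) with ha
  set g : ((Fin d × Fin d) × Fin d × Fin d) → ℂ := fun I =>
    (if I.1.1 = I.1.2 then (1:ℂ) else 0) * (if I.2.1 = I.2.2 then 1 else 0)
      + (if I.1.1 = I.2.2 then 1 else 0) * (if I.2.1 = I.1.2 then 1 else 0) with hg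
  set z : (Fin (d+1) × Fin d) → (Fin (d+1) × Fin d) → ℂ := fun M N =>
    ∑ x, (starRingEnd ℂ) (v M.1 M.2 x) * v N.1 N.2 x with hz
  have hz_dot : ∀ M N : Fin (d+1) × Fin d, z M N = star (v M.1 M.2) ⬝ᵥ v N.1 N.2 := by
    intro M N; simp [hz, dotProduct]
  have hzz : ∀ M N : Fin (d+1) × Fin d, z M N * (starRingEnd ℂ) (z M N)
      = if M.1 = N.1 then (if M.2 = N.2 then (1:ℂ) else 0) else ((d:ℂ))⁻¹ := by
    intro M N
    by_cases h : M.1 = N.1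
    · have : z M N = if M.2 = N.2 then 1 else 0 := by
        rw [hz_dot, h]; exact horth N.1 M.2 N.2
      rw [this]
      by_cases h2 : M.2 = N.2 <;> simp [h, h2]
    · have h1 := hunbiased M.1 N.1 h M.2 N.2
      rw [if_neg h, Complex.mul_conj, hz_dot, ← Complex.sq_norm, h1]
      push_cast
      rw [one_div]
  have hzconj : ∀ M N : Fin (d+1) × Fin d,
      ∑ x, v M.1 M.2 x * (starRingEnd ℂ) (v N.1 N.2 x) = (starRingEnd ℂ) (z M N) := by
    intro M N
    rw [hz, map_sum]
    exact Finset.sum_congr rfl fun x _ => by simp [mul_comm]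
  have hzdiag : ∀ M : Fin (d+1) × Fin d, z M M = 1 := by
    intro M; rw [hz_dot]; simpa using horth M.1 M.2 M.2
  have hone : ∀ M : Fin (d+1) × Fin d,
      ∑ x, v M.1 M.2 x * (starRingEnd ℂ) (v M.1 M.2 x) = 1 := by
    intro M; rw [hzconj M M, hzdiag]; simp
  have hone' : ∀ M : Fin (d+1) × Fin d,
      ∑ x, (starRingEnd ℂ) (v M.1 M.2 x) * v M.1 M.2 x = 1 := by
    intro M; simpa [hz] using hzdiag M
  -- factorization per (M, N)
  have hsum_a : ∀ M N : Fin (d+1) × Fin d,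
      ∑ I : (Fin d × Fin d) × Fin d × Fin d, a M I * (starRingEnd ℂ) (a N I)
        = (z M N * (starRingEnd ℂ) (z M N))^2 := by
    intro M N
    calc ∑ I : (Fin d × Fin d) × Fin d × Fin d, a M I * (starRingEnd ℂ) (a N I)
        = ∑ i : Fin d, ∑ j : Fin d, ∑ p : Fin d, ∑ q : Fin d,
            (v M.1 M.2 i * (starRingEnd ℂ) (v N.1 N.2 i)) *
            ((starRingEnd ℂ) (v M.1 M.2 j) * v N.1 N.2 j) *
            (v M.1 M.2 p * (starRingEnd ℂ) (v N.1 N.2 p)) *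
            ((starRingEnd ℂ) (v M.1 M.2 q) * v N.1 N.2 q) := by
          simp only [Fintype.sum_prod_type]
          refine Finset.sum_congr rfl fun i _ => Finset.sum_congr rfl fun j _ =>
            Finset.sum_congr rfl fun p _ => Finset.sum_congr rfl fun q _ => ?_
          simp only [ha, _root_.map_mul, Complex.conj_conj]
          ring
      _ = (∑ i, v M.1 M.2 i * (starRingEnd ℂ) (v N.1 N.2 i)) *
          (∑ j, (starRingEnd ℂ) (v M.1 M.2 j) * v N.1 N.2 j) *
          (∑ p, v M.1 M.2 p * (starRingEnd ℂ) (v N.1 N.2 p)) *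
          (∑ q, (starRingEnd ℂ) (v M.1 M.2 q) * v N.1 N.2 q) := by
          simp only [← Finset.sum_mul, ← Finset.mul_sum]
      _ = (z M N * (starRingEnd ℂ) (z M N))^2 := by
          rw [hzconj M N]
          have hzz' : ∑ x, (starRingEnd ℂ) (v M.1 M.2 x) * v N.1 N.2 x = z M N := by
            rw [hz]
          rw [hzz']
          ring
  -- S1
  have hS1 : ∑ I : (Fin d × Fin d) × Fin d × Fin d,
      (∑ M, a M I) * (starRingEnd ℂ) (∑ N, a N I) = ((d:ℂ)+1) * (2*d) := by
    calc ∑ I : (Fin d × Fin d) × Fin d × Fin d, (∑ M, a M I) * (starRingEnd ℂ) (∑ N, a N I)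
        = ∑ I : (Fin d × Fin d) × Fin d × Fin d, ∑ M, ∑ N, a M I * (starRingEnd ℂ) (a N I) := by
          refine Finset.sum_congr rfl fun I _ => ?_
          rw [map_sum, Finset.sum_mul_sum]
      _ = ∑ M, ∑ N, ∑ I : (Fin d × Fin d) × Fin d × Fin d, a M I * (starRingEnd ℂ) (a N I) := by
          rw [Finset.sum_comm]
          exact Finset.sum_congr rfl fun M _ => Finset.sum_comm
      _ = ∑ M : Fin (d+1) × Fin d, ∑ N : Fin (d+1) × Fin d,
            (if M.1 = N.1 then (if M.2 = N.2 then (1:ℂ) else 0) else ((d:ℂ))⁻¹)^2 := by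
          refine Finset.sum_congr rfl fun M _ => Finset.sum_congr rfl fun N _ => ?_
          rw [hsum_a, hzz]
      _ = ∑ m : Fin (d+1), ∑ n : Fin (d+1), (if m = n then (d:ℂ) else 1) := by
          simp only [Fintype.sum_prod_type]
          refine Finset.sum_congr rfl fun m _ => ?_
          rw [Finset.sum_comm]
          refine Finset.sum_congr rfl fun n _ => ?_
          by_cases h : m = n
          · simp [h, Finset.sum_ite_eq, apply_ite (fun z : ℂ => z^2)]
          · simp only [h, if_false]
            rw [Finset.sum_const, Finset.sum_const]
            simp only [card_univ, Fintype.card_fin, nsmul_eq_mul]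
            field_simp
      _ = ((d:ℂ)+1) * (2*d) := by
          have key : ∀ m : Fin (d+1), ∑ n, (if m = n then (d:ℂ) else 1) = 2*d := by
            intro m
            have h' : ∀ n : Fin (d+1), (if m = n then (d:ℂ) else 1)
                = (if m = n then (d:ℂ) - 1 else 0) + 1 := by
              intro n; by_cases h : m = n <;> simp [h]
            rw [Finset.sum_congr rfl fun n _ => h' n, Finset.sum_add_distrib,
              Finset.sum_ite_eq, Finset.sum_const]
            simp only [mem_univ, if_true, card_univ, Fintype.card_fin, nsmul_eq_mul]
            push_cast; ring
          rw [Finset.sum_congr rfl fun m _ => key m, Finset.sum_const]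
          simp only [card_univ, Fintype.card_fin, nsmul_eq_mul]
          push_cast; ring
  -- swap helper
  have sw : ∀ (F : Fin d → Fin d → (Fin (d+1) × Fin d) → ℂ),
      ∑ i, ∑ p, ∑ M, F i p M = ∑ M, ∑ i, ∑ p, F i p M := by
    intro F
    calc ∑ i, ∑ p, ∑ M, F i p M
        = ∑ i, ∑ M, ∑ p, F i p M := Finset.sum_congr rfl fun _ _ => Finset.sum_comm
      _ = ∑ M, ∑ i, ∑ p, F i p M := Finset.sum_comm
  -- S2
  have hS2 : ∑ I : (Fin d × Fin d) × Fin d × Fin d, (∑ M, a M I) * g I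
      = ((d:ℂ)+1) * (2*d) := by
    have step : ∑ I : (Fin d × Fin d) × Fin d × Fin d, (∑ M, a M I) * g I
        = (∑ i : Fin d, ∑ p : Fin d, ∑ M : Fin (d+1) × Fin d, a M ((i,i),(p,p)))
          + (∑ i : Fin d, ∑ p : Fin d, ∑ M : Fin (d+1) × Fin d, a M ((i,p),(p,i))) := by
      simp only [hg, Fintype.sum_prod_type, mul_add, Finset.sum_add_distrib]
      congr 1
      · refine Finset.sum_congr rfl fun i _ => ?_
        simp [mul_ite, mul_one, mul_zero, Finset.sum_ite_eq, Finset.sum_ite_eq']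
      · refine Finset.sum_congr rfl fun i _ => ?_
        simp [mul_ite, mul_one, mul_zero, Finset.sum_ite_eq, Finset.sum_ite_eq']
    rw [step, sw, sw]
    have h1 : ∀ M : Fin (d+1) × Fin d,
        ∑ i : Fin d, ∑ p : Fin d, a M ((i,i),(p,p)) = 1 := by
      intro M
      calc ∑ i : Fin d, ∑ p : Fin d, a M ((i,i),(p,p))
          = ∑ i : Fin d, ∑ p : Fin d,
              (v M.1 M.2 i * (starRingEnd ℂ) (v M.1 M.2 i)) *
              (v M.1 M.2 p * (starRingEnd ℂ) (v M.1 M.2 p)) := by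
            simp only [ha]
        _ = (∑ i, v M.1 M.2 i * (starRingEnd ℂ) (v M.1 M.2 i)) *
            (∑ p, v M.1 M.2 p * (starRingEnd ℂ) (v M.1 M.2 p)) := by
            simp only [← Finset.sum_mul, ← Finset.mul_sum]
        _ = 1 := by rw [hone M]; ring
    have h2 : ∀ M : Fin (d+1) × Fin d,
        ∑ i : Fin d, ∑ p : Fin d, a M ((i,p),(p,i)) = 1 := by
      intro M
      calc ∑ i : Fin d, ∑ p : Fin d, a M ((i,p),(p,i))
          = ∑ i : Fin d, ∑ p : Fin d,
              (v M.1 M.2 i * (starRingEnd ℂ) (v M.1 M.2 i)) *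
              ((starRingEnd ℂ) (v M.1 M.2 p) * v M.1 M.2 p) := by
            refine Finset.sum_congr rfl fun i _ => Finset.sum_congr rfl fun p _ => ?_
            simp only [ha]; ring
        _ = (∑ i, v M.1 M.2 i * (starRingEnd ℂ) (v M.1 M.2 i)) *
            (∑ p, (starRingEnd ℂ) (v M.1 M.2 p) * v M.1 M.2 p) := by
            simp only [← Finset.sum_mul, ← Finset.mul_sum]
        _ = 1 := by rw [hone M, hone' M]; ring
    rw [Finset.sum_congr rfl fun M _ => h1 M, Finset.sum_congr rfl fun M _ => h2 M]
    simp only [Finset.sum_const, card_univ, Fintype.card_prod, Fintype.card_fin, nsmul_eq_mul]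
    push_cast; ring
  -- S3
  have hS3 : ∑ I : (Fin d × Fin d) × Fin d × Fin d, (starRingEnd ℂ) (∑ M, a M I) * g I
      = ((d:ℂ)+1) * (2*d) := by
    have step : ∑ I : (Fin d × Fin d) × Fin d × Fin d, (starRingEnd ℂ) (∑ M, a M I) * g I
        = (∑ i : Fin d, ∑ p : Fin d, ∑ M : Fin (d+1) × Fin d, (starRingEnd ℂ) (a M ((i,i),(p,p))))
          + (∑ i : Fin d, ∑ p : Fin d, ∑ M : Fin (d+1) × Fin d, (starRingEnd ℂ) (a M ((i,p),(p,i)))) := by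
      simp only [hg, Fintype.sum_prod_type, mul_add, Finset.sum_add_distrib, map_sum]
      congr 1
      · refine Finset.sum_congr rfl fun i _ => ?_
        simp [mul_ite, mul_one, mul_zero, Finset.sum_ite_eq, Finset.sum_ite_eq']
      · refine Finset.sum_congr rfl fun i _ => ?_
        simp [mul_ite, mul_one, mul_zero, Finset.sum_ite_eq, Finset.sum_ite_eq']
    rw [step, sw, sw]
    have h1 : ∀ M : Fin (d+1) × Fin d,
        ∑ i : Fin d, ∑ p : Fin d, (starRingEnd ℂ) (a M ((i,i),(p,p))) = 1 := by
      intro M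
      calc ∑ i : Fin d, ∑ p : Fin d, (starRingEnd ℂ) (a M ((i,i),(p,p)))
          = ∑ i : Fin d, ∑ p : Fin d,
              ((starRingEnd ℂ) (v M.1 M.2 i) * v M.1 M.2 i) *
              ((starRingEnd ℂ) (v M.1 M.2 p) * v M.1 M.2 p) := by
            refine Finset.sum_congr rfl fun i _ => Finset.sum_congr rfl fun p _ => ?_
            simp only [ha, _root_.map_mul, Complex.conj_conj]; try ring
        _ = (∑ i, (starRingEnd ℂ) (v M.1 M.2 i) * v M.1 M.2 i) *
            (∑ p, (starRingEnd ℂ) (v M.1 M.2 p) * v M.1 M.2 p) := by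
            simp only [← Finset.sum_mul, ← Finset.mul_sum]
        _ = 1 := by rw [hone' M]; ring
    have h2 : ∀ M : Fin (d+1) × Fin d,
        ∑ i : Fin d, ∑ p : Fin d, (starRingEnd ℂ) (a M ((i,p),(p,i))) = 1 := by
      intro M
      calc ∑ i : Fin d, ∑ p : Fin d, (starRingEnd ℂ) (a M ((i,p),(p,i)))
          = ∑ i : Fin d, ∑ p : Fin d,
              ((starRingEnd ℂ) (v M.1 M.2 i) * v M.1 M.2 i) *
              (v M.1 M.2 p * (starRingEnd ℂ) (v M.1 M.2 p)) := by
            refine Finset.sum_congr rfl fun i _ => Finset.sum_congr rfl fun p _ => ?_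
            simp only [ha, _root_.map_mul, Complex.conj_conj]; try ring
        _ = (∑ i, (starRingEnd ℂ) (v M.1 M.2 i) * v M.1 M.2 i) *
            (∑ p, v M.1 M.2 p * (starRingEnd ℂ) (v M.1 M.2 p)) := by
            simp only [← Finset.sum_mul, ← Finset.mul_sum]
        _ = 1 := by rw [hone' M, hone M]; ring
    rw [Finset.sum_congr rfl fun M _ => h1 M, Finset.sum_congr rfl fun M _ => h2 M]
    simp only [Finset.sum_const, card_univ, Fintype.card_prod, Fintype.card_fin, nsmul_eq_mul]
    push_cast; ring
  -- S4
  have hS4 : ∑ I : (Fin d × Fin d) × Fin d × Fin d, g I * g I = ((d:ℂ)+1) * (2*d) := by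
    simp only [hg, Fintype.sum_prod_type]
    simp [mul_add, add_mul, mul_ite, ite_mul, mul_one, mul_zero, one_mul, zero_mul,
      Finset.sum_add_distrib, Finset.sum_ite_eq, Finset.sum_ite_eq', card_univ]
    ring
  -- conjugation of g
  have hgconj : ∀ I, (starRingEnd ℂ) (g I) = g I := by
    intro I
    simp [hg, apply_ite (starRingEnd ℂ)]
  -- sum of |T|^2 is zero
  set T : ((Fin d × Fin d) × Fin d × Fin d) → ℂ := fun I => (∑ M, a M I) - g I with hT
  have hTzero : ∑ I : (Fin d × Fin d) × Fin d × Fin d, T I * (starRingEnd ℂ) (T I) = 0 := by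
    have expand : ∀ I, T I * (starRingEnd ℂ) (T I)
        = (∑ M, a M I) * (starRingEnd ℂ) (∑ M, a M I)
          - (∑ M, a M I) * g I - (starRingEnd ℂ) (∑ M, a M I) * g I + g I * g I := by
      intro I
      simp only [hT, map_sub, hgconj]
      ring
    rw [Finset.sum_congr rfl fun I _ => expand I]
    simp only [Finset.sum_add_distrib, Finset.sum_sub_distrib]
    rw [hS1, hS2, hS3, hS4]
    ring
  have hTall : ∀ I, T I = 0 := by
    have hre : ∑ I : (Fin d × Fin d) × Fin d × Fin d, Complex.normSq (T I) = 0 := by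
      have : ((∑ I : (Fin d × Fin d) × Fin d × Fin d, Complex.normSq (T I) : ℝ) : ℂ) = 0 := by
        push_cast
        rw [← hTzero]
        exact Finset.sum_congr rfl fun I _ => (Complex.mul_conj (T I)).symm
      exact_mod_cast this
    intro I
    have h0 : Complex.normSq (T I) = 0 := by
      have := (Finset.sum_eq_zero_iff_of_nonneg
        (fun I _ => Complex.normSq_nonneg (T I))).mp hre I (Finset.mem_univ I)
      exact this
    exact Complex.normSq_eq_zero.mp h0
  have := hTall ((i,j),(p,q))
  rw [hT, sub_eq_zero] at this
  calc ∑ m, ∑ k, v m k i * (starRingEnd ℂ) (v m k j) * (v m k p * (starRingEnd ℂ) (v m k q))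
      = ∑ M : Fin (d+1) × Fin d, a M ((i,j),(p,q)) := by
        rw [Fintype.sum_prod_type]
    _ = g ((i,j),(p,q)) := this
    _ = _ := by simp [hg]

end MUBaux

/-- MUB operator decomposition: given d+1 mutually unbiased orthonormal bases
of ℂ^d with projectors Π_k^{(m)}, every d×d matrix A satisfies
A = −Tr(A)·1 + Σ_{m,k} Tr(A·Π_k^{(m)})·Π_k^{(m)}. -/
theorem mub_operator_decomposition
    {d : ℕ} (hd : 1 ≤ d)
    (v : Fin (d + 1) → Fin d → Fin d → ℂ)
    (horth : ∀ m k j, star (v m k) ⬝ᵥ v m j = if k = j then 1 else 0)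
    (hunbiased : ∀ m n, m ≠ n → ∀ k j,
      ‖star (v m k) ⬝ᵥ v n j‖ ^ 2 = 1 / (d : ℝ))
    (A : Matrix (Fin d) (Fin d) ℂ) :
    A = (-A.trace) • (1 : Matrix (Fin d) (Fin d) ℂ)
      + ∑ m, ∑ k, (A * projOf (v m k)).trace • projOf (v m k) := by
  have htr : ∀ w : Fin d → ℂ,
      (A * projOf w).trace = ∑ x, ∑ y, A x y * (w y * (starRingEnd ℂ) (w x)) := by
    intro w
    simp [Matrix.trace, Matrix.diag, Matrix.mul_apply, projOf, vecMulVec_apply,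
      Pi.star_apply, Complex.star_def]
  ext i j
  have hproj : ∀ (w : Fin d → ℂ), projOf w i j = w i * (starRingEnd ℂ) (w j) := by
    intro w
    simp [projOf, vecMulVec_apply, Pi.star_apply, Complex.star_def]
  rw [Matrix.add_apply, Matrix.smul_apply, Matrix.one_apply]
  have hsum : (∑ m, ∑ k, (A * projOf (v m k)).trace • projOf (v m k)) i j
      = ∑ m, ∑ k, (A * projOf (v m k)).trace * (v m k i * (starRingEnd ℂ) (v m k j)) := by
    rw [Matrix.sum_apply]
    refine Finset.sum_congr rfl fun m _ => ?_
    rw [Matrix.sum_apply]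
    refine Finset.sum_congr rfl fun k _ => ?_
    rw [Matrix.smul_apply, hproj, smul_eq_mul]
  rw [hsum]
  have key : ∑ m, ∑ k, (A * projOf (v m k)).trace * (v m k i * (starRingEnd ℂ) (v m k j))
      = (if i = j then (1:ℂ) else 0) * A.trace + A i j := by
    calc ∑ m, ∑ k, (A * projOf (v m k)).trace * (v m k i * (starRingEnd ℂ) (v m k j))
        = ∑ m, ∑ k, ∑ x, ∑ y,
            A x y * (v m k y * (starRingEnd ℂ) (v m k x) *
              (v m k i * (starRingEnd ℂ) (v m k j))) := by
          refine Finset.sum_congr rfl fun m _ => Finset.sum_congr rfl fun k _ => ?_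
          rw [htr]
          simp only [Finset.sum_mul]
          refine Finset.sum_congr rfl fun x _ => Finset.sum_congr rfl fun y _ => ?_
          ring
      _ = ∑ x, ∑ y, ∑ m, ∑ k,
            A x y * (v m k y * (starRingEnd ℂ) (v m k x) *
              (v m k i * (starRingEnd ℂ) (v m k j))) := MUBaux.sum_swap_4 _
      _ = ∑ x, ∑ y, A x y *
            ((if y = x then (1:ℂ) else 0) * (if i = j then 1 else 0)
              + (if y = j then 1 else 0) * (if i = x then 1 else 0)) := by
          refine Finset.sum_congr rfl fun x _ => Finset.sum_congr rfl fun y _ => ?_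
          rw [← MUBaux.design hd v horth hunbiased y x i j]
          simp only [← Finset.mul_sum]
      _ = (if i = j then (1:ℂ) else 0) * A.trace + A i j := by
          simp only [mul_add, Finset.sum_add_distrib]
          congr 1
          · by_cases h : i = j
            · simp [h, Matrix.trace, Matrix.diag, mul_ite, mul_one, mul_zero,
                Finset.sum_ite_eq']
            · simp [h]
          · simp [mul_ite, ite_mul, mul_one, mul_zero, Finset.sum_ite_eq',
              Finset.sum_ite_eq]
  rw [key]
  by_cases h : i = j <;> simp [h] <;> ring
end

section
/- (Matrix-unit decomposition over the non-computational MUBs.) Let d ≥ 1 and let v : Fin (d+1) → Fin d → ℂ^d be d+1 mutually unbiased orthonormal bases of ℂ^d such that the first basis v(1,·) is the standard (computational) basis. Let Π_k^{(m)} = |v(m,k)⟩⟨v(m,k)|. Then for every pair of distinct indices i ≠ j, the matrix unit A_{ij} = |j⟩⟨i| (the matrix with a single 1 in row j, column i) satisfies A_{ij} = Σ_{m=2}^{d+1} Σ_{k=1}^{d} Tr(A_{ij}·Π_k^{(m)})·Π_k^{(m)}, and moreover every coefficient η = d·Tr(A_{ij}·Π_k^{(m)}) has modulus |η| = 1. 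-/
open Matrix

open ComplexConjugate

lemma projOf_herm {d : ℕ} (w : Fin d → ℂ) : (projOf w)ᴴ = projOf w := by
  ext a b; simp [projOf, vecMulVec_apply, mul_comm]

lemma dot_conj {d : ℕ} (w w' : Fin d → ℂ) : star w' ⬝ᵥ w = conj (star w ⬝ᵥ w') := by
  simp [dotProduct, map_sum, mul_comm]

lemma trace_std_mul_proj {d : ℕ} (i j : Fin d) (w : Fin d → ℂ) :
    (single j i (1 : ℂ) * projOf w).trace = w i * conj (w j) := by
  simp [Matrix.trace, Matrix.diag, Matrix.mul_apply, Matrix.single, projOf,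
    Matrix.vecMulVec_apply, ite_and, Finset.sum_ite_eq]

lemma trace_proj_mul_proj {d : ℕ} (w w' : Fin d → ℂ) :
    (projOf w * projOf w').trace = (star w' ⬝ᵥ w) * (star w ⬝ᵥ w') := by
  simp only [Matrix.trace, Matrix.diag, Matrix.mul_apply, projOf, Matrix.vecMulVec_apply,
    dotProduct, Pi.star_apply, RCLike.star_def]
  rw [Finset.sum_mul_sum]
  refine Finset.sum_congr rfl fun a _ => Finset.sum_congr rfl fun c _ => by ring

lemma proj_sum_eq_one {d : ℕ} (v : Fin d → Fin d → ℂ)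
    (horth : ∀ k j, star (v k) ⬝ᵥ v j = if k = j then 1 else 0) :
    ∑ k, projOf (v k) = 1 := by
  classical
  set N : Matrix (Fin d) (Fin d) ℂ := Matrix.of fun k a => star (v k a) with hN
  have h1 : N * Nᴴ = 1 := by
    ext k l
    have := horth k l
    simpa [hN, Matrix.mul_apply, Matrix.conjTranspose_apply, dotProduct,
      Matrix.one_apply] using this
  have h2 : Nᴴ * N = 1 := mul_eq_one_comm.mp h1
  ext a b
  have := congrFun (congrFun h2 a) b
  simpa [hN, Matrix.mul_apply, Matrix.conjTranspose_apply, projOf, Matrix.vecMulVec_apply,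
    Matrix.sum_apply, Matrix.one_apply, mul_comm] using this

lemma frob {n : ℕ} (M : Matrix (Fin n) (Fin n) ℂ) (h : (Mᴴ * M).trace = 0) : M = 0 := by
  have h' : ∑ b, ∑ a, Complex.normSq (M a b) = 0 := by
    have h2 : (Mᴴ * M).trace = ((∑ b, ∑ a, Complex.normSq (M a b) : ℝ) : ℂ) := by
      simp only [Matrix.trace, Matrix.diag, Matrix.mul_apply, Matrix.conjTranspose_apply]
      push_cast
      refine Finset.sum_congr rfl fun b _ => Finset.sum_congr rfl fun a _ => ?_
      rw [mul_comm]; exact Complex.mul_conj _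
    rw [h2] at h
    exact_mod_cast h
  ext a b
  have := (Finset.sum_eq_zero_iff_of_nonneg (fun b _ => Finset.sum_nonneg fun a _ => Complex.normSq_nonneg _)).mp h' b (Finset.mem_univ b)
  have := (Finset.sum_eq_zero_iff_of_nonneg (fun a _ => Complex.normSq_nonneg _)).mp this a (Finset.mem_univ a)
  simpa using Complex.normSq_eq_zero.mp this

/-- Matrix-unit decomposition over the non-computational MUBs: if the first of
d+1 mutually unbiased bases is the computational basis, then for i ≠ j the
matrix unit A_{ij} = |j⟩⟨i| decomposes over the remaining d bases, and every
coefficient d·Tr(A_{ij}·Π_k^{(m)}) has modulus 1. -/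
theorem matrix_unit_mub_decomposition
    {d : ℕ} (hd : 1 ≤ d)
    (v : Fin (d + 1) → Fin d → Fin d → ℂ)
    (horth : ∀ m k j, star (v m k) ⬝ᵥ v m j = if k = j then 1 else 0)
    (hunbiased : ∀ m n, m ≠ n → ∀ k j,
      ‖star (v m k) ⬝ᵥ v n j‖ ^ 2 = 1 / (d : ℝ))
    (hcomp : ∀ k, v 0 k = Pi.single k 1)
    (i j : Fin d) (hij : i ≠ j) :
    (single j i (1 : ℂ)
        = ∑ m ∈ Finset.univ.erase (0 : Fin (d + 1)), ∑ k,
            (single j i (1 : ℂ) * projOf (v m k)).trace • projOf (v m k))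
      ∧ ∀ m : Fin (d + 1), m ≠ 0 → ∀ k,
          ‖(d : ℂ) *
            (single j i (1 : ℂ) * projOf (v m k)).trace‖ = 1 := by
  classical
  have hdR : (d : ℝ) ≠ 0 := Nat.cast_ne_zero.mpr (by omega)
  have hdC : (d : ℂ) ≠ 0 := Nat.cast_ne_zero.mpr (by omega)
  set e0 := Finset.univ.erase (0 : Fin (d+1)) with he0
  set c : Fin (d+1) → Fin d → ℂ := fun m k => v m k i * conj (v m k j) with hc
  have htr : ∀ m k, (single j i (1 : ℂ) * projOf (v m k)).trace = c m k :=
    fun m k => trace_std_mul_proj i j (v m k)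
  have habs2 : ∀ m : Fin (d+1), m ≠ 0 → ∀ k a, ‖v m k a‖ ^ 2 = 1 / d := by
    intro m hm k a
    have h := hunbiased m 0 hm k a
    rw [hcomp a] at h
    have hdot : star (v m k) ⬝ᵥ Pi.single a (1:ℂ) = conj (v m k a) := by
      simp [dotProduct_single]
    rw [hdot] at h
    simpa [Complex.norm_conj] using h
  have hmod : ∀ m : Fin (d+1), m ≠ 0 → ∀ k a, conj (v m k a) * v m k a = (1/(d:ℂ)) := by
    intro m hm k a
    rw [mul_comm, Complex.mul_conj, Complex.normSq_eq_norm_sq, habs2 m hm k a]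
    push_cast; ring
  have hsum1 : ∀ m : Fin (d+1), ∑ k, projOf (v m k) = 1 :=
    fun m => proj_sum_eq_one (v m) (horth m)
  have hc0 : ∀ m : Fin (d+1), ∑ l, c m l = 0 := by
    intro m
    have h := congrFun (congrFun (hsum1 m) i) j
    simpa [projOf, Matrix.sum_apply, Matrix.vecMulVec_apply, Matrix.one_apply, hij, hc]
      using h
  have hcc : ∀ m : Fin (d+1), m ≠ 0 → ∀ k, conj (c m k) * c m k = 1/(d:ℂ)^2 := by
    intro m hm k
    have h1 := hmod m hm k i
    have h2 := hmod m hm k j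
    have he : conj (c m k) * c m k
        = (conj (v m k i) * v m k i) * (conj (v m k j) * v m k j) := by
      simp only [hc]
      rw [map_mul (starRingEnd ℂ), Complex.conj_conj]
      ring
    rw [he, h1, h2]; ring
  set T := ∑ m ∈ e0, ∑ k, c m k • projOf (v m k) with hT
  have hPT : ∀ m ∈ e0, ∀ k, (projOf (v m k) * T).trace = c m k := by
    intro m hm k
    rw [hT]
    simp only [Finset.mul_sum, Matrix.mul_smul, Matrix.trace_sum, Matrix.trace_smul,
      smul_eq_mul]
    rw [Finset.sum_eq_single_of_mem m hm]
    · rw [Finset.sum_eq_single k]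
      · rw [trace_proj_mul_proj]
        simp [horth]
      · intro l _ hl
        rw [trace_proj_mul_proj]
        simp [horth, hl, Ne.symm hl]
      · intro h; exact absurd (Finset.mem_univ k) h
    · intro n hn hnm
      have h1 : ∀ l, (projOf (v m k) * projOf (v n l)).trace = (1/(d:ℂ)) := by
        intro l
        rw [trace_proj_mul_proj, dot_conj (v m k) (v n l), mul_comm, Complex.mul_conj,
          Complex.normSq_eq_norm_sq, hunbiased m n (Ne.symm hnm) k l]
        push_cast; ring
      simp only [h1]
      rw [← Finset.sum_mul, hc0 n, zero_mul]
  have hTstar : Tᴴ = ∑ m ∈ e0, ∑ k, conj (c m k) • projOf (v m k) := by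
    rw [hT]
    simp [Matrix.conjTranspose_sum, Matrix.conjTranspose_smul, projOf_herm]
  have hsumcc : ∑ m ∈ e0, ∑ k, conj (c m k) * c m k = 1 := by
    rw [Finset.sum_congr rfl fun m hm => Finset.sum_congr rfl fun k _ =>
      hcc m (Finset.ne_of_mem_erase hm) k]
    have hcard : e0.card = d := by
      simp [he0, Finset.card_erase_of_mem]
    simp only [Finset.sum_const, Finset.card_univ, Fintype.card_fin, nsmul_eq_mul, hcard]
    field_simp
    simp [Finset.card_erase_of_mem]
  have hTT : (Tᴴ * T).trace = 1 := by
    rw [hTstar]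
    simp only [Finset.sum_mul, Matrix.smul_mul, Matrix.trace_sum, Matrix.trace_smul,
      smul_eq_mul]
    rw [Finset.sum_congr rfl fun m hm => Finset.sum_congr rfl fun k _ => by
      rw [hPT m hm k]]
    exact hsumcc
  have hEstar : (single j i (1:ℂ))ᴴ = single i j (1:ℂ) := by
    ext a b
    simp [Matrix.single, Matrix.conjTranspose_apply, apply_ite, and_comm]
  have htr' : ∀ m k, (single i j (1:ℂ) * projOf (v m k)).trace = conj (c m k) := by
    intro m k
    rw [trace_std_mul_proj j i (v m k)]
    simp only [hc]
    rw [map_mul (starRingEnd ℂ), Complex.conj_conj]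
    ring
  have hET : ((single j i (1:ℂ))ᴴ * T).trace = 1 := by
    rw [hEstar, hT]
    simp only [Finset.mul_sum, Matrix.mul_smul, Matrix.trace_sum, Matrix.trace_smul,
      smul_eq_mul]
    rw [Finset.sum_congr rfl fun m hm => Finset.sum_congr rfl fun k _ => by
      rw [htr' m k, mul_comm]]
    exact hsumcc
  have hTE : (Tᴴ * single j i (1:ℂ)).trace = 1 := by
    rw [hTstar]
    simp only [Finset.sum_mul, Matrix.smul_mul, Matrix.trace_sum, Matrix.trace_smul,
      smul_eq_mul]
    rw [Finset.sum_congr rfl fun m hm => Finset.sum_congr rfl fun k _ => by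
      rw [Matrix.trace_mul_comm, htr m k]]
    exact hsumcc
  have hEE : ((single j i (1:ℂ))ᴴ * single j i (1:ℂ)).trace = 1 := by
    rw [hEstar]
    simp [Matrix.trace, Matrix.diag, Matrix.mul_apply, Matrix.single, ite_and,
      Finset.sum_ite_eq]
  have hfinal : single j i (1:ℂ) - T = 0 := by
    apply frob
    rw [Matrix.conjTranspose_sub, Matrix.sub_mul, Matrix.mul_sub, Matrix.mul_sub,
      Matrix.trace_sub, Matrix.trace_sub, Matrix.trace_sub, hEE, hET, hTE, hTT]
    ring
  constructor
  · have hsum : ∑ m ∈ e0, ∑ k,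
        (single j i (1 : ℂ) * projOf (v m k)).trace • projOf (v m k) = T := by
      rw [hT]
      exact Finset.sum_congr rfl fun m _ => Finset.sum_congr rfl fun k _ => by rw [htr]
    rw [hsum]
    exact sub_eq_zero.mp hfinal
  · intro m hm k
    rw [htr m k]
    set x := ‖(d:ℂ) * c m k‖ with hx
    have h2 : x ^ 2 = 1 := by
      have he : x ^ 2
          = (d:ℝ)^2 * (‖v m k i‖ ^ 2 * ‖v m k j‖ ^ 2) := by
        simp only [hx, hc, norm_mul, Complex.norm_conj, Complex.norm_natCast]
        ring
      rw [he, habs2 m hm k i, habs2 m hm k j]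
      field_simp
    have hx0 : 0 ≤ x := norm_nonneg _
    have h3 : (x - 1) * (x + 1) = 0 := by ring_nf; linarith [h2]
    rcases mul_eq_zero.mp h3 with h | h
    · linarith
    · linarith
end

section
/- (Spectral-gap lemma of quantum state verification.) Let Ω be a Hermitian d×d complex matrix with 0 ≤ Ω ≤ 1 (positive semidefinite with all eigenvalues at most 1), let ψ ∈ ℂ^d be a unit vector with Ωψ = ψ, and suppose there is ν ∈ (0,1] such that ⟪φ, Ωφ⟫ ≤ (1−ν)·‖φ‖² for every vector φ orthogonal to ψ. Then for every density matrix σ and every ε ∈ [0,1] with ⟪ψ, σψ⟫ ≤ 1 − ε, one has Tr(Ωσ) ≤ 1 − ν·ε. -/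
open Matrix
open scoped ComplexOrder

lemma psd_trace_nonneg {d : ℕ} {A : Matrix (Fin d) (Fin d) ℂ}
    (hA : A.PosSemidef) : 0 ≤ A.trace := by
  rw [Matrix.trace]
  apply Finset.sum_nonneg
  intro i _
  have h := hA.dotProduct_mulVec_nonneg (Pi.single i 1)
  simpa [Matrix.mulVec, dotProduct, Pi.single_apply] using h

lemma psd_trace_mul_nonneg {d : ℕ} {A B : Matrix (Fin d) (Fin d) ℂ}
    (hA : A.PosSemidef) (hB : B.PosSemidef) : 0 ≤ (A * B).trace := by
  classical
  open scoped MatrixOrder in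
  obtain ⟨C, rfl⟩ := CStarAlgebra.nonneg_iff_eq_star_mul_self.mp hA.nonneg
  rw [mul_assoc, Matrix.trace_mul_comm, star_eq_conjTranspose]
  exact psd_trace_nonneg (hB.mul_mul_conjTranspose_same C)

/-- Spectral-gap lemma of quantum state verification: if 0 ≤ Ω ≤ 1 is a
strategy operator with Ωψ = ψ and ⟪φ, Ωφ⟫ ≤ (1−ν)‖φ‖² on the orthogonal
complement of ψ, then any density matrix σ with fidelity at most 1−ε to ψ
passes with probability Tr(Ωσ) ≤ 1 − νε. -/
theorem spectral_gap_verification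
    {d : ℕ} (Ω : Matrix (Fin d) (Fin d) ℂ)
    (hΩherm : Ω.IsHermitian) (hΩpos : Ω.PosSemidef)
    (hΩle : ((1 : Matrix (Fin d) (Fin d) ℂ) - Ω).PosSemidef)
    (ψ : Fin d → ℂ) (hψ : star ψ ⬝ᵥ ψ = 1)
    (hfix : Ω.mulVec ψ = ψ)
    (ν : ℝ) (hν0 : 0 < ν) (hν1 : ν ≤ 1)
    (hgap : ∀ φ : Fin d → ℂ, star ψ ⬝ᵥ φ = 0 →
      star φ ⬝ᵥ Ω.mulVec φ ≤ ((1 : ℂ) - (ν : ℂ)) * (star φ ⬝ᵥ φ))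
    (σ : Matrix (Fin d) (Fin d) ℂ)
    (hσ : σ.PosSemidef) (hσtr : σ.trace = 1)
    (ε : ℝ) (hε0 : 0 ≤ ε) (hε1 : ε ≤ 1)
    (hfid : star ψ ⬝ᵥ σ.mulVec ψ ≤ ((1 : ℂ) - (ε : ℂ))) :
    (Ω * σ).trace ≤ ((1 : ℂ) - (ν : ℂ) * (ε : ℂ)) := by
  classical
  set P : Matrix (Fin d) (Fin d) ℂ := vecMulVec ψ (star ψ) with hP
  -- ψ* Ω = ψ*
  have hfix' : star ψ ᵥ* Ω = star ψ := by
    have := congrArg star hfix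
    rwa [Matrix.star_mulVec, hΩherm.eq] at this
  -- auxiliary matrix M
  set M : Matrix (Fin d) (Fin d) ℂ :=
    ((1 : ℂ) - (ν : ℂ)) • (1 : Matrix (Fin d) (Fin d) ℂ) + (ν : ℂ) • P - Ω with hM
  have hPherm : P.IsHermitian := by
    ext i j
    simp [hP, Matrix.conjTranspose_apply, vecMulVec_apply, mul_comm]
  have hMherm : M.IsHermitian := by
    have h1 : star ((1 : ℂ) - (ν : ℂ)) = (1 : ℂ) - (ν : ℂ) := by
      simp [Complex.star_def, Complex.conj_ofReal]
    have h2 : star ((ν : ℂ)) = (ν : ℂ) := by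
      simp [Complex.star_def, Complex.conj_ofReal]
    unfold M
    unfold Matrix.IsHermitian
    rw [conjTranspose_sub, conjTranspose_add, conjTranspose_smul, conjTranspose_smul,
      conjTranspose_one, hΩherm.eq, hPherm.eq, h1, h2]
  -- M is PSD
  have hMpsd : M.PosSemidef := by
    refine Matrix.PosSemidef.of_dotProduct_mulVec_nonneg hMherm fun x => ?_
    set c : ℂ := star ψ ⬝ᵥ x with hc
    set φ : Fin d → ℂ := x - c • ψ with hφ
    have hx : x = c • ψ + φ := by simp [hφ]
    have horth : star ψ ⬝ᵥ φ = 0 := by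
      simp [hφ, dotProduct_sub, dotProduct_smul, hψ, ← hc, smul_eq_mul]
    have horth' : star φ ⬝ᵥ ψ = 0 := by
      rw [star_dotProduct, horth, star_zero]
    have hΩψφ : star ψ ⬝ᵥ Ω *ᵥ φ = 0 := by
      rw [Matrix.dotProduct_mulVec, hfix', horth]
    have hΩφψ : star φ ⬝ᵥ Ω *ᵥ ψ = 0 := by rw [hfix, horth']
    have hΩψψ : star ψ ⬝ᵥ Ω *ᵥ ψ = 1 := by rw [hfix, hψ]
    have hPx : star x ⬝ᵥ P *ᵥ x = star c * c := by
      have : P *ᵥ x = (star ψ ⬝ᵥ x) • ψ := by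
        ext i
        simp only [hP, Matrix.mulVec, vecMulVec_apply, dotProduct, Pi.smul_apply,
          smul_eq_mul, Finset.sum_mul]
        exact Finset.sum_congr rfl fun k _ => by ring
      rw [this, dotProduct_smul, ← hc, star_dotProduct, ← hc, smul_eq_mul, mul_comm]
    have hxx : star x ⬝ᵥ x = star c * c + star φ ⬝ᵥ φ := by
      rw [hx]
      simp [star_add, star_smul, add_dotProduct, dotProduct_add, smul_dotProduct,
        dotProduct_smul, hψ, horth, horth', smul_eq_mul]
      ring
    have hΩx : star x ⬝ᵥ Ω *ᵥ x = star c * c + star φ ⬝ᵥ Ω *ᵥ φ := by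
      rw [hx]
      simp [star_add, star_smul, add_dotProduct, dotProduct_add, smul_dotProduct,
        dotProduct_smul, Matrix.mulVec_add, Matrix.mulVec_smul, hΩψψ, hΩψφ, hΩφψ,
        smul_eq_mul]
      ring
    have hgapφ := hgap φ horth
    have key : star x ⬝ᵥ M *ᵥ x
        = ((1 : ℂ) - (ν : ℂ)) * (star φ ⬝ᵥ φ) - star φ ⬝ᵥ Ω *ᵥ φ := by
      simp only [hM, Matrix.sub_mulVec, Matrix.add_mulVec, Matrix.smul_mulVec,
        Matrix.one_mulVec, dotProduct_sub, dotProduct_add, dotProduct_smul,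
        smul_eq_mul, hPx, hxx, hΩx]
      ring
    rw [key, sub_nonneg]
    exact hgapφ
  -- trace computations
  have htr : 0 ≤ (M * σ).trace := psd_trace_mul_nonneg hMpsd hσ
  have hPσ : (P * σ).trace = star ψ ⬝ᵥ σ.mulVec ψ := by
    simp [hP, Matrix.trace, Matrix.diag, Matrix.mul_apply, vecMulVec_apply,
      dotProduct, Matrix.mulVec, Finset.mul_sum]
    rw [Finset.sum_comm]
    congr 1; ext j; congr 1; ext i; ring
  have hexp : (M * σ).trace
      = ((1 : ℂ) - (ν : ℂ)) * σ.trace + (ν : ℂ) * (P * σ).trace - (Ω * σ).trace := by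
    simp [hM, Matrix.sub_mul, Matrix.add_mul, Matrix.smul_mul, Matrix.trace_sub,
      Matrix.trace_add, Matrix.trace_smul, smul_eq_mul]
  rw [hexp, hσtr, hPσ, mul_one] at htr
  have hνpos : (0 : ℂ) ≤ (ν : ℂ) := by
    rw [Complex.zero_le_real]; exact hν0.le
  have h2 : (ν : ℂ) * (star ψ ⬝ᵥ σ.mulVec ψ) ≤ (ν : ℂ) * ((1 : ℂ) - (ε : ℂ)) :=
    mul_le_mul_of_nonneg_left hfid hνpos
  have h3 : (Ω * σ).trace ≤ ((1 : ℂ) - (ν : ℂ)) + (ν : ℂ) * (star ψ ⬝ᵥ σ.mulVec ψ) :=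
    sub_nonneg.mp htr
  calc (Ω * σ).trace ≤ ((1 : ℂ) - (ν : ℂ)) + (ν : ℂ) * (star ψ ⬝ᵥ σ.mulVec ψ) := h3
    _ ≤ ((1 : ℂ) - (ν : ℂ)) + (ν : ℂ) * ((1 : ℂ) - (ε : ℂ)) := add_le_add_right h2 _
    _ = ((1 : ℂ) - (ν : ℂ) * (ε : ℂ)) := by ring
end
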